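/- Accuracy sandwich for outlyingness under deviation bounds: suppose sup_u |μ̂_u - μ_u| ≤ s, sup_u |μ_u - θ^T u| ≤ c_3, and c_1/2 ≤ σ̂_u ≤ 2c_2 for all unit u, where θ ∈ ℝ^d. Then for all x ∈ ℝ^d: (i) O(x, ν̂) ≥ (‖x - θ‖ - c_3 - s)/(2c_2), and (ii) O(x, ν̂) ≤ (‖x - θ‖ + c_3 + s)/(c_1/2). Consequently the ball B(θ, c_1τ/2 - s - c_3) is contained in the level set A_τ = {x : O(x, ν̂) ≤ τ}, which in turn is contained in B(θ, 2c_2τ + s + c_3). -/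
import Mathlib


open RealInnerProductSpace

noncomputable section

variable {d : ℕ}

/-- The outlyingness `O(x, ν̂) = sup_u |x⬝u - μ̂_u| / σ̂_u`. -/
def outlyFn (μh σh : Metric.sphere (0 : EuclideanSpace ℝ (Fin d)) 1 → ℝ)
    (x : EuclideanSpace ℝ (Fin d)) : ℝ :=
  ⨆ u : Metric.sphere (0 : EuclideanSpace ℝ (Fin d)) 1,
    |⟪x, (u : EuclideanSpace ℝ (Fin d))⟫ - μh u| / σh u

/-- Accuracy sandwich for the outlyingness under deviation bounds: if
`sup_u |μ̂_u - μ_u| ≤ s`, `sup_u |μ_u - θ⬝u| ≤ c₃`, and `c₁/2 ≤ σ̂_u ≤ 2c₂` for all unit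
`u`, then for all `x`: (i) `(‖x - θ‖ - c₃ - s)/(2c₂) ≤ O(x, ν̂)`, (ii)
`O(x, ν̂) ≤ (‖x - θ‖ + c₃ + s)/(c₁/2)`, and consequently
`B(θ, c₁τ/2 - s - c₃) ⊆ A_τ ⊆ B(θ, 2c₂τ + s + c₃)`. -/
theorem outly_accuracy_sandwich (hd : 0 < d)
    (μh σh μp : Metric.sphere (0 : EuclideanSpace ℝ (Fin d)) 1 → ℝ)
    (θ : EuclideanSpace ℝ (Fin d))
    (c₁ c₂ c₃ s τ : ℝ)
    (hc₁ : 0 < c₁) (hc₁₂ : c₁ ≤ c₂) (hc₃ : 0 < c₃) (hs : 0 < s) (hτ : 0 < τ)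
    (hlevel : 0 < c₁ * τ / 2 - s - c₃)
    (hμdev : ∀ u, |μh u - μp u| ≤ s)
    (hμpop : ∀ u, |μp u - ⟪θ, (u : EuclideanSpace ℝ (Fin d))⟫| ≤ c₃)
    (hσ : ∀ u, c₁ / 2 ≤ σh u ∧ σh u ≤ 2 * c₂) :
    (∀ x, (‖x - θ‖ - c₃ - s) / (2 * c₂) ≤ outlyFn μh σh x) ∧
    (∀ x, outlyFn μh σh x ≤ (‖x - θ‖ + c₃ + s) / (c₁ / 2)) ∧
    Metric.closedBall θ (c₁ * τ / 2 - s - c₃) ⊆ {x | outlyFn μh σh x ≤ τ} ∧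
    {x | outlyFn μh σh x ≤ τ} ⊆ Metric.closedBall θ (2 * c₂ * τ + s + c₃) := by
  have hc₂ : 0 < c₂ := lt_of_lt_of_le hc₁ hc₁₂
  have hσpos : ∀ u, 0 < σh u := fun u => lt_of_lt_of_le (by linarith) (hσ u).1
  haveI hne : Nonempty (Metric.sphere (0 : EuclideanSpace ℝ (Fin d)) 1) :=
    ⟨⟨EuclideanSpace.single (⟨0, hd⟩ : Fin d) (1 : ℝ), by
      simp [mem_sphere_zero_iff_norm, EuclideanSpace.norm_single]⟩⟩
  have hnorm : ∀ u : Metric.sphere (0 : EuclideanSpace ℝ (Fin d)) 1,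
      ‖(u : EuclideanSpace ℝ (Fin d))‖ = 1 := by
    intro u
    have := u.2
    simpa [mem_sphere_zero_iff_norm] using this
  -- numerator bound
  have hnum : ∀ x (u : Metric.sphere (0 : EuclideanSpace ℝ (Fin d)) 1),
      |⟪x, (u : EuclideanSpace ℝ (Fin d))⟫ - μh u| ≤ ‖x - θ‖ + c₃ + s := by
    intro x u
    have h1 : |⟪x - θ, (u : EuclideanSpace ℝ (Fin d))⟫| ≤ ‖x - θ‖ := by
      have := abs_real_inner_le_norm (x - θ) (u : EuclideanSpace ℝ (Fin d))
      simpa [hnorm u] using this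
    have h2 := abs_le.mp (hμpop u)
    have h3 := abs_le.mp (hμdev u)
    have h1' := abs_le.mp h1
    have key : ⟪x, (u : EuclideanSpace ℝ (Fin d))⟫ - μh u
        = ⟪x - θ, (u : EuclideanSpace ℝ (Fin d))⟫
          + (⟪θ, (u : EuclideanSpace ℝ (Fin d))⟫ - μp u) + (μp u - μh u) := by
      rw [inner_sub_left]; ring
    rw [abs_le, key]
    constructor <;> linarith [h1'.1, h1'.2, h2.1, h2.2, h3.1, h3.2]
  -- each term bounded
  have hterm : ∀ x (u : Metric.sphere (0 : EuclideanSpace ℝ (Fin d)) 1),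
      |⟪x, (u : EuclideanSpace ℝ (Fin d))⟫ - μh u| / σh u
        ≤ (‖x - θ‖ + c₃ + s) / (c₁ / 2) := by
    intro x u
    exact div_le_div₀ (by positivity) (hnum x u) (by linarith) (hσ u).1
  have hbdd : ∀ x, BddAbove (Set.range fun u : Metric.sphere (0 : EuclideanSpace ℝ (Fin d)) 1 =>
      |⟪x, (u : EuclideanSpace ℝ (Fin d))⟫ - μh u| / σh u) := by
    intro x
    exact ⟨(‖x - θ‖ + c₃ + s) / (c₁ / 2), by
      rintro y ⟨u, rfl⟩; exact hterm x u⟩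
  have hub : ∀ x, outlyFn μh σh x ≤ (‖x - θ‖ + c₃ + s) / (c₁ / 2) := by
    intro x
    exact ciSup_le (hterm x)
  have hlb : ∀ x, (‖x - θ‖ - c₃ - s) / (2 * c₂) ≤ outlyFn μh σh x := by
    intro x
    rcases eq_or_ne x θ with heq | hx
    · have h0 : (‖x - θ‖ - c₃ - s) / (2 * c₂) ≤ 0 := by
        rw [heq, sub_self, norm_zero]
        apply div_nonpos_of_nonpos_of_nonneg <;> linarith
      refine h0.trans ?_
      obtain ⟨u₀⟩ := hne
      calc (0 : ℝ) ≤ |⟪x, (u₀ : EuclideanSpace ℝ (Fin d))⟫ - μh u₀| / σh u₀ :=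
            div_nonneg (abs_nonneg _) (hσpos u₀).le
        _ ≤ outlyFn μh σh x := le_ciSup (hbdd x) u₀
    · have hxθ : (0 : ℝ) < ‖x - θ‖ := by
        rw [norm_pos_iff]; exact sub_ne_zero_of_ne hx
      set v : EuclideanSpace ℝ (Fin d) := ‖x - θ‖⁻¹ • (x - θ) with hv
      have hvnorm : ‖v‖ = 1 := by
        rw [hv, norm_smul, norm_inv, norm_norm, inv_mul_cancel₀ hxθ.ne']
      set u : Metric.sphere (0 : EuclideanSpace ℝ (Fin d)) 1 :=
        ⟨v, by simp [mem_sphere_zero_iff_norm, hvnorm]⟩ with hu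
      have hcoe : (u : EuclideanSpace ℝ (Fin d)) = v := rfl
      have hinner : ⟪x - θ, (u : EuclideanSpace ℝ (Fin d))⟫ = ‖x - θ‖ := by
        rw [hcoe, hv]
        simp only [real_inner_smul_right]
        rw [real_inner_self_eq_norm_sq]
        field_simp
      have key : ⟪x, (u : EuclideanSpace ℝ (Fin d))⟫ - μh u
          = ‖x - θ‖ + (⟪θ, (u : EuclideanSpace ℝ (Fin d))⟫ - μp u) + (μp u - μh u) := by
        have : ⟪x, (u : EuclideanSpace ℝ (Fin d))⟫
            = ⟪x - θ, (u : EuclideanSpace ℝ (Fin d))⟫ + ⟪θ, (u : EuclideanSpace ℝ (Fin d))⟫ := by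
          rw [inner_sub_left]; ring
        rw [this, hinner]; ring
      have h2 := abs_le.mp (hμpop u)
      have h3 := abs_le.mp (hμdev u)
      have hge : ‖x - θ‖ - c₃ - s ≤ |⟪x, (u : EuclideanSpace ℝ (Fin d))⟫ - μh u| := by
        refine le_trans ?_ (le_abs_self _)
        rw [key]
        linarith [h2.1, h2.2, h3.1, h3.2]
      calc (‖x - θ‖ - c₃ - s) / (2 * c₂)
          ≤ |⟪x, (u : EuclideanSpace ℝ (Fin d))⟫ - μh u| / σh u :=
            div_le_div₀ (abs_nonneg _) hge (hσpos u) (hσ u).2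
        _ ≤ outlyFn μh σh x := le_ciSup (hbdd x) u
  refine ⟨hlb, hub, ?_, ?_⟩
  · intro x hxball
    have hxd : ‖x - θ‖ ≤ c₁ * τ / 2 - s - c₃ := by
      rw [Metric.mem_closedBall, dist_eq_norm] at hxball
      exact hxball
    have : outlyFn μh σh x ≤ (‖x - θ‖ + c₃ + s) / (c₁ / 2) := hub x
    have hle : (‖x - θ‖ + c₃ + s) / (c₁ / 2) ≤ τ := by
      rw [div_le_iff₀ (by linarith)]
      nlinarith
    exact le_trans this hle
  · intro x hxset
    have h1 : (‖x - θ‖ - c₃ - s) / (2 * c₂) ≤ τ := le_trans (hlb x) hxset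
    rw [div_le_iff₀ (by linarith)] at h1
    rw [Metric.mem_closedBall, dist_eq_norm]
    nlinarith

end
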